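/- arXiv:1202.5258 — 7 statements merged into one kernel-verified Lean document; each statement's English description precedes it below -/
import Mathlib

section
/- For every natural number k ≥ 1, there exists a probability distribution μ on {-1,1}^k such that: (i) for every coordinate i, the expectation of x_i under μ is 0; (ii) for every pair of distinct coordinates i ≠ j, the expectation of x_i · x_j under μ is 0 (i.e., the coordinates are pairwise independent with uniform marginals); and (iii) the probability under μ of the all-ones vector (1,1,...,1) equals 1/(2·⌈(k+1)/2⌉). -/
/-!
A distribution on `{-1,1}^k` that is invariant under permutations of the coordinates is determined
by the law `q` of the number `w` of coordinates equal to `-1`, and by symmetry its moments are read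
off from the coordinate sum `s = k - 2w`: `k·E[xᵢ] = E[s]` and `k(k-1)·E[xᵢxⱼ] = E[s² - k]`.
So it suffices to find `q` with `E[s] = 0`, `E[s²] = k` and `q 0 = 1 / (2⌈(k+1)/2⌉)`. For `k = 2n`
put mass `1/(2n+2)` on `w = 0`, `n/(2n+2)` on `w = n+1` and `1/2` on `w = n`; for `k = 2n+1` put
mass `1/(2n+2)` on `w = 0` and the rest on `w = n+1`.
-/

/-- The ±1 sign associated to a boolean coordinate. -/
noncomputable def sgn (b : Bool) : ℝ := if b then 1 else -1

open Finset

lemma sgn_mul_self (b : Bool) : sgn b * sgn b = 1 := by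
  cases b <;> norm_num [sgn]

variable {ι : Type*} [Fintype ι]

def negCount (x : ι → Bool) : ℕ := #{i | x i = false}

lemma negCount_le (x : ι → Bool) : negCount x ≤ Fintype.card ι :=
  card_filter_le _ _

lemma negCount_comp_perm (x : ι → Bool) (σ : Equiv.Perm ι) : negCount (x ∘ σ) = negCount x :=
  card_equiv σ (by simp)

lemma negCount_eq_zero_iff {x : ι → Bool} : negCount x = 0 ↔ x = fun _ => true := by
  simp [negCount, funext_iff]

lemma sum_sgn_eq (x : ι → Bool) : ∑ i, sgn (x i) = Fintype.card ι - 2 * negCount x := by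
  have hsgn : ∀ b, sgn b = 1 - 2 * if b = false then 1 else 0 := by
    intro b; cases b <;> norm_num [sgn]
  simp only [hsgn, sum_sub_distrib, ← mul_sum, sum_boole, negCount]
  simp

variable [DecidableEq ι]

def IsPermInvariant (μ : (ι → Bool) → ℝ) : Prop :=
  ∀ (σ : Equiv.Perm ι) x, μ (x ∘ σ) = μ x

namespace IsPermInvariant

variable {μ : (ι → Bool) → ℝ}

lemma sum_mul_comp (hμ : IsPermInvariant μ) (σ : Equiv.Perm ι) (g : (ι → Bool) → ℝ) :
    ∑ x, μ x * g (x ∘ σ) = ∑ x, μ x * g x := by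
  calc ∑ x, μ x * g (x ∘ σ) = ∑ x, μ (x ∘ σ) * g (x ∘ σ) := by simp only [hμ σ]
    _ = ∑ x, μ x * g x := Equiv.sum_comp (σ.symm.arrowCongr (Equiv.refl Bool)) fun x => μ x * g x

lemma sum_mul_sgn_eq (hμ : IsPermInvariant μ) (i j : ι) :
    ∑ x, μ x * sgn (x i) = ∑ x, μ x * sgn (x j) := by
  simpa using hμ.sum_mul_comp (Equiv.swap i j) fun x => sgn (x j)

lemma sum_mul_sgn_mul_sgn_eq (hμ : IsPermInvariant μ) {i j a b : ι} (hij : i ≠ j) (hab : a ≠ b) :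
    ∑ x, μ x * (sgn (x i) * sgn (x j)) = ∑ x, μ x * (sgn (x a) * sgn (x b)) := by
  obtain ⟨σ, hσi, hσj⟩ :=
    MulAction.is_two_pretransitive_iff.mp (Equiv.Perm.isMultiplyPretransitive ι 2) hab hij
  rw [Equiv.Perm.smul_def] at hσi hσj
  simpa [hσi, hσj] using hμ.sum_mul_comp σ fun x => sgn (x a) * sgn (x b)

lemma card_mul_sum_mul_sgn (hμ : IsPermInvariant μ) (i : ι) :
    Fintype.card ι * ∑ x, μ x * sgn (x i) = ∑ x, μ x * ∑ j, sgn (x j) := by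
  calc (Fintype.card ι : ℝ) * ∑ x, μ x * sgn (x i) = ∑ j, ∑ x, μ x * sgn (x j) := by
        simp [hμ.sum_mul_sgn_eq _ i]
    _ = ∑ x, μ x * ∑ j, sgn (x j) := by simp only [mul_sum]; exact sum_comm

lemma card_mul_pred_mul_sum_mul_sgn_mul_sgn (hμ : IsPermInvariant μ) {i j : ι} (hij : i ≠ j) :
    Fintype.card ι * (Fintype.card ι - 1) * ∑ x, μ x * (sgn (x i) * sgn (x j)) =
      ∑ x, μ x * ((∑ a, sgn (x a)) ^ 2 - Fintype.card ι) := by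
  set n : ℝ := (Fintype.card ι : ℝ)
  have hrow : ∀ a, ∑ b, ∑ x, μ x * (sgn (x a) * sgn (x b)) =
      ∑ x, μ x + (n - 1) * ∑ x, μ x * (sgn (x i) * sgn (x j)) := by
    intro a
    rw [← add_sum_erase _ _ (mem_univ a), sum_congr rfl fun b hb =>
      (hμ.sum_mul_sgn_mul_sgn_eq hij (ne_of_mem_erase hb).symm).symm]
    simp [n, sgn_mul_self, card_erase_of_mem, Nat.cast_sub (Fintype.card_pos_iff.2 ⟨a⟩)]
  calc n * (n - 1) * ∑ x, μ x * (sgn (x i) * sgn (x j))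
      = ∑ a : ι, (∑ x, μ x + (n - 1) * ∑ x, μ x * (sgn (x i) * sgn (x j))) -
          n * ∑ x, μ x := by
        simp [n]; ring
    _ = ∑ a, ∑ b, ∑ x, μ x * (sgn (x a) * sgn (x b)) - n * ∑ x, μ x := by simp_rw [hrow]
    _ = ∑ x, μ x * ((∑ a, sgn (x a)) ^ 2 - n) := by
        simp only [sq, mul_sub, sum_sub_distrib, mul_sum, sum_mul, mul_comm n]
        congr 1
        rw [sum_comm]
        exact (sum_congr rfl fun b _ => sum_comm).trans sum_comm

end IsPermInvariant

lemma exists_negCount_eq {w : ℕ} (hw : w ≤ Fintype.card ι) : ∃ x : ι → Bool, negCount x = w := by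
  obtain ⟨s, -, hs⟩ := exists_subset_card_eq (s := (univ : Finset ι)) hw
  exact ⟨fun i => decide (i ∉ s), by simp [negCount, hs]⟩

noncomputable def uniformOnLayers (q : ℕ → ℝ) (x : ι → Bool) : ℝ :=
  q (negCount x) / #{y : ι → Bool | negCount y = negCount x}

lemma isPermInvariant_uniformOnLayers (q : ℕ → ℝ) :
    IsPermInvariant (uniformOnLayers (ι := ι) q) := fun σ x => by
  simp only [uniformOnLayers, negCount_comp_perm]

lemma uniformOnLayers_nonneg {q : ℕ → ℝ} (hq : ∀ w, 0 ≤ q w) (x : ι → Bool) :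
    0 ≤ uniformOnLayers q x :=
  div_nonneg (hq _) (Nat.cast_nonneg _)

lemma uniformOnLayers_const_true (q : ℕ → ℝ) : uniformOnLayers q (fun _ : ι => true) = q 0 := by
  rw [uniformOnLayers, negCount_eq_zero_iff.2 rfl]
  simp [negCount_eq_zero_iff, filter_eq']

lemma sum_uniformOnLayers_mul (q G : ℕ → ℝ) :
    ∑ x : ι → Bool, uniformOnLayers q x * G (negCount x) =
      ∑ w ∈ range (Fintype.card ι + 1), q w * G w := by
  rw [← sum_fiberwise_of_maps_to fun x _ => mem_range_succ_iff.2 (negCount_le x)]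
  refine sum_congr rfl fun w hw => ?_
  obtain ⟨y, hy⟩ := exists_negCount_eq (ι := ι) (mem_range_succ_iff.1 hw)
  have hcard : (#{x : ι → Bool | negCount x = w} : ℝ) ≠ 0 :=
    Nat.cast_ne_zero.2 (card_ne_zero.2 ⟨y, by simpa using hy⟩)
  calc ∑ x with negCount x = w, uniformOnLayers q x * G (negCount x)
      = ∑ x with negCount x = w, q w / #{x : ι → Bool | negCount x = w} * G w :=
        sum_congr rfl fun x hx => by rw [uniformOnLayers, (mem_filter.1 hx).2]
    _ = q w * G w := by rw [sum_const, nsmul_eq_mul]; field_simp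

theorem exists_pairwise_uncorrelated_of_weight_moments {k : ℕ} {q : ℕ → ℝ} (hq : ∀ w, 0 ≤ q w)
    (hsum : ∑ w ∈ range (k + 1), q w = 1)
    (hmean : ∑ w ∈ range (k + 1), q w * (k - 2 * w) = 0)
    (hvar : ∑ w ∈ range (k + 1), q w * ((k - 2 * w) ^ 2 - k) = 0) :
    ∃ μ : (Fin k → Bool) → ℝ,
      (∀ x, 0 ≤ μ x) ∧
      (∑ x : Fin k → Bool, μ x) = 1 ∧
      (∀ i : Fin k, (∑ x : Fin k → Bool, μ x * sgn (x i)) = 0) ∧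
      (∀ i j : Fin k, i ≠ j →
        (∑ x : Fin k → Bool, μ x * (sgn (x i) * sgn (x j))) = 0) ∧
      μ (fun _ => true) = q 0 := by
  have hμ := isPermInvariant_uniformOnLayers (ι := Fin k) q
  refine ⟨uniformOnLayers q, uniformOnLayers_nonneg hq, ?_, fun i => ?_, fun i j hij => ?_,
    uniformOnLayers_const_true q⟩
  · simpa [hsum] using sum_uniformOnLayers_mul (ι := Fin k) q 1
  · have hk : (k : ℝ) ≠ 0 := Nat.cast_ne_zero.2 (Fin.pos i).ne'
    have h := hμ.card_mul_sum_mul_sgn i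
    simp only [Fintype.card_fin, sum_sgn_eq, sum_uniformOnLayers_mul q fun w => (k : ℝ) - 2 * w, hmean] at h
    exact (mul_eq_zero.1 h).resolve_left hk
  · have hk : 1 < k := by have := i.isLt; have := j.isLt; have := Fin.val_ne_of_ne hij; omega
    have hk' : (k : ℝ) * (k - 1) ≠ 0 :=
      mul_ne_zero (by positivity) (sub_ne_zero.2 (Nat.one_lt_cast.2 hk).ne')
    have h := hμ.card_mul_pred_mul_sum_mul_sgn_mul_sgn hij
    simp only [Fintype.card_fin, sum_sgn_eq, sum_uniformOnLayers_mul q fun w => ((k : ℝ) - 2 * w) ^ 2 - k, hvar] at h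
    exact (mul_eq_zero.1 h).resolve_left hk'

theorem exists_pairwise_uncorrelated_of_three_weights {k w₁ w₂ : ℕ} (hw₁ : w₁ ≠ 0) (hw₂ : w₂ ≠ 0)
    (hw₁k : w₁ ≤ k) (hw₂k : w₂ ≤ k) {p α β : ℝ} (hp : 0 ≤ p) (hα : 0 ≤ α) (hβ : 0 ≤ β)
    (hsum : p + α + β = 1)
    (hmean : p * k + α * (k - 2 * w₁) + β * (k - 2 * w₂) = 0)
    (hvar : p * (k ^ 2 - k) + α * ((k - 2 * w₁) ^ 2 - k) + β * ((k - 2 * w₂) ^ 2 - k) = 0) :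
    ∃ μ : (Fin k → Bool) → ℝ,
      (∀ x, 0 ≤ μ x) ∧
      (∑ x : Fin k → Bool, μ x) = 1 ∧
      (∀ i : Fin k, (∑ x : Fin k → Bool, μ x * sgn (x i)) = 0) ∧
      (∀ i j : Fin k, i ≠ j →
        (∑ x : Fin k → Bool, μ x * (sgn (x i) * sgn (x j))) = 0) ∧
      μ (fun _ => true) = p := by
  set q : ℕ → ℝ := fun w =>
    (if w = 0 then p else 0) + (if w = w₁ then α else 0) + (if w = w₂ then β else 0)
  have hq : ∀ G : ℕ → ℝ, ∑ w ∈ range (k + 1), q w * G w = p * G 0 + α * G w₁ + β * G w₂ := by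
    intro G
    simp [q, add_mul, ite_mul, sum_add_distrib, hw₁k, hw₂k]
  have hq0 : q 0 = p := by simp [q, hw₁.symm, hw₂.symm]
  rw [← hq0]
  refine exists_pairwise_uncorrelated_of_weight_moments (fun w => ?_) ?_ ?_ ?_
  · positivity
  · simpa [hsum] using hq fun _ => 1
  · simpa [hq] using hmean
  · simpa [hq] using hvar

/-- For every `k ≥ 1` there is a probability distribution `μ` on `{-1,1}^k`
(encoded as `Fin k → Bool` with `true ↦ 1`, `false ↦ -1`) whose coordinates have mean zero,
are pairwise uncorrelated, and such that the all-ones vector has probability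
`1 / (2 * ⌈(k+1)/2⌉)`. -/
theorem stmt0 (k : ℕ) (hk : 1 ≤ k) :
    ∃ μ : (Fin k → Bool) → ℝ,
      (∀ x, 0 ≤ μ x) ∧
      (∑ x : Fin k → Bool, μ x) = 1 ∧
      (∀ i : Fin k, (∑ x : Fin k → Bool, μ x * sgn (x i)) = 0) ∧
      (∀ i j : Fin k, i ≠ j →
        (∑ x : Fin k → Bool, μ x * (sgn (x i) * sgn (x j))) = 0) ∧
      μ (fun _ => true) = 1 / (2 * (⌈((k : ℝ) + 1) / 2⌉ : ℤ)) := by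
  obtain ⟨n, rfl | rfl⟩ := Nat.even_or_odd' k
  · have hceil : ⌈(((2 * n : ℕ) : ℝ) + 1) / 2⌉ = n + 1 := by
      rw [Int.ceil_eq_iff]; push_cast; constructor <;> linarith
    rw [hceil]; push_cast
    exact exists_pairwise_uncorrelated_of_three_weights (w₁ := n + 1) (w₂ := n)
      (α := n / (2 * (n + 1))) (β := 1 / 2) (by omega) (by omega) (by omega) (by omega)
      (by positivity) (by positivity) (by positivity)
      (by field_simp; ring) (by push_cast; field_simp; ring) (by push_cast; field_simp; ring)
  · have hceil : ⌈(((2 * n + 1 : ℕ) : ℝ) + 1) / 2⌉ = n + 1 := by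
      rw [Int.ceil_eq_iff]; push_cast; constructor <;> linarith
    rw [hceil]; push_cast
    exact exists_pairwise_uncorrelated_of_three_weights (w₁ := n + 1) (w₂ := n + 1)
      (α := (2 * n + 1) / (2 * (n + 1))) (β := 0) (by omega) (by omega) (by omega) (by omega)
      (by positivity) (by positivity) le_rfl
      (by field_simp; ring) (by push_cast; field_simp; ring) (by push_cast; field_simp; ring)
end

section
/- Fix a real number a with 0 < a < 1. For all real b, c, d ≥ 0 satisfying b + c + d = 1 - a and such that at least one of b, c, d equals 0, one has h_a(b,c,d) ≤ arccos(2a-1) + 2·arccos(a). Moreover, this bound is attained: h_a(0, (1-a)/2, (1-a)/2) = arccos(2a-1) + 2·arccos(a). -/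
/-!
On a face of the simplex, say `b = 0`, the first term is the constant `arccos (2a - 1)`, and the two remaining
arguments `x = cos α`, `y = cos β` have mean `a ≥ 0`. Sum-to-product gives
`cos ((α + β) / 2) * cos ((α - β) / 2) = a` with both factors in `[0, 1]`, so
`cos ((α + β) / 2) ≥ a`, i.e. `α + β ≤ 2 arccos a`, with equality when `x = y = a`.
-/

open Real

/-- `h_a(b,c,d) = arccos(2(a+b)-1) + arccos(2(a+c)-1) + arccos(2(a+d)-1)`. -/
noncomputable def hFun (a b c d : ℝ) : ℝ :=
  Real.arccos (2 * (a + b) - 1) + Real.arccos (2 * (a + c) - 1) +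
    Real.arccos (2 * (a + d) - 1)

theorem Real.arccos_add_arccos_le_two_mul_arccos_midpoint {x y : ℝ} (hx₁ : -1 ≤ x) (hx₂ : x ≤ 1)
    (hy₁ : -1 ≤ y) (hy₂ : y ≤ 1) (hxy : 0 ≤ x + y) :
    arccos x + arccos y ≤ 2 * arccos ((x + y) / 2) := by
  set α := arccos x
  set β := arccos y
  have hα := arccos_nonneg x
  have hβ := arccos_nonneg y
  have hαπ := arccos_le_pi x
  have hβπ := arccos_le_pi y
  have hsum_le : α + β ≤ π := by
    have : β ≤ arccos (-x) := antitone_arccos (by linarith)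
    rw [arccos_neg] at this
    linarith
  have hprod : (x + y) / 2 = cos ((α + β) / 2) * cos ((α - β) / 2) := by
    rw [← cos_arccos hx₁ hx₂, ← cos_arccos hy₁ hy₂, cos_add_cos]
    ring
  have hcos_half_sum : 0 ≤ cos ((α + β) / 2) :=
    cos_nonneg_of_neg_pi_div_two_le_of_le (by linarith) (by linarith)
  have hcos_half_diff : 0 ≤ cos ((α - β) / 2) :=
    cos_nonneg_of_neg_pi_div_two_le_of_le (by linarith) (by linarith)
  have hmean_le : (x + y) / 2 ≤ cos ((α + β) / 2) := by
    rw [hprod]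
    exact mul_le_of_le_one_right hcos_half_sum (cos_le_one _)
  have hhalf_sum_le := antitone_arccos hmean_le
  rw [arccos_cos (by linarith) (by linarith)] at hhalf_sum_le
  linarith

theorem arccos_add_arccos_le_of_add_eq {a c d : ℝ} (ha : 0 ≤ a) (hc : 0 ≤ c) (hd : 0 ≤ d)
    (hsum : c + d = 1 - a) :
    arccos (2 * (a + c) - 1) + arccos (2 * (a + d) - 1) ≤ 2 * arccos a := by
  have := arccos_add_arccos_le_two_mul_arccos_midpoint (x := 2 * (a + c) - 1) (y := 2 * (a + d) - 1)
    (by linarith) (by linarith) (by linarith) (by linarith) (by linarith)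
  rwa [show (2 * (a + c) - 1 + (2 * (a + d) - 1)) / 2 = a by linarith] at this

theorem stmt3_general (a : ℝ) (ha0 : 0 < a) :
    (∀ b c d : ℝ, 0 ≤ b → 0 ≤ c → 0 ≤ d → b + c + d = 1 - a →
      (b = 0 ∨ c = 0 ∨ d = 0) →
      hFun a b c d ≤ Real.arccos (2 * a - 1) + 2 * Real.arccos a) ∧
    hFun a 0 ((1 - a) / 2) ((1 - a) / 2)
      = Real.arccos (2 * a - 1) + 2 * Real.arccos a := by
  refine ⟨fun b c d hb hc hd hsum hzero => ?_, ?_⟩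
  · rcases hzero with rfl | rfl | rfl <;> simp only [hFun, add_zero]
    · linarith [arccos_add_arccos_le_of_add_eq ha0.le hc hd (by linarith)]
    · linarith [arccos_add_arccos_le_of_add_eq ha0.le hb hd (by linarith)]
    · linarith [arccos_add_arccos_le_of_add_eq ha0.le hb hc (by linarith)]
  · rw [hFun, add_zero, show 2 * (a + (1 - a) / 2) - 1 = a by ring]
    ring

/-- For `0 < a < 1`, on the boundary of the simplex
`{(b,c,d) : b,c,d ≥ 0, b+c+d = 1-a}` (i.e. where some coordinate vanishes) we have
`h_a(b,c,d) ≤ arccos(2a-1) + 2·arccos a`, and the bound is attained at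
`(0, (1-a)/2, (1-a)/2)`. -/
theorem stmt3 (a : ℝ) (ha0 : 0 < a) (ha1 : a < 1) :
    (∀ b c d : ℝ, 0 ≤ b → 0 ≤ c → 0 ≤ d → b + c + d = 1 - a →
      (b = 0 ∨ c = 0 ∨ d = 0) →
      hFun a b c d ≤ Real.arccos (2 * a - 1) + 2 * Real.arccos a) ∧
    hFun a 0 ((1 - a) / 2) ((1 - a) / 2)
      = Real.arccos (2 * a - 1) + 2 * Real.arccos a :=
  stmt3_general a ha0
end

section
/- Fix a real number a with 0 < a ≤ 1, and let b, c, d ≥ 0 be reals with b + c + d = 1 - a. If (1-2c-2d)² = (1-2a-2c)² and (1-2a-2c)² = (1-2a-2d)², then either h_a(b,c,d) = π + arccos(4a-1) or h_a(b,c,d) = 3·arccos((4a-1)/3). Moreover, the first case can occur only when a ≤ 1/3. -/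
/-! The squared equalities have four solutions on the plane `b + c + d = 1 - a`: two of
`b, c, d` equal `a` (the third is then `1 - 3a`), or `b = c = d = (1 - a)/3`. In the first
case the arguments of `arccos` are `4a - 1`, `4a - 1`, `1 - 4a`, and `arccos (-x) = π - arccos x`
gives `π + arccos (4a - 1)`, while `1 - 3a ≥ 0` forces `a ≤ 1/3`; in the second all three
arguments are `(4a - 1)/3`. -/

open Real

lemma hFun_swap_bc (a b c d : ℝ) : hFun a b c d = hFun a c b d := by
  unfold hFun; ring

lemma hFun_swap_cd (a b c d : ℝ) : hFun a b c d = hFun a b d c := by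
  unfold hFun; ring

lemma hFun_of_c_eq_of_d_eq {a b c d : ℝ} (hsum : b + c + d = 1 - a) (hc : c = a) (hd : d = a) :
    hFun a b c d = π + arccos (4 * a - 1) := by
  have hb : 2 * (a + b) - 1 = -(4 * a - 1) := by linarith
  unfold hFun
  rw [hb, hc, hd, arccos_neg]
  ring_nf

lemma hFun_of_b_eq_c_eq_d {a b c d : ℝ} (hsum : b + c + d = 1 - a) (hbc : b = c) (hcd : c = d) :
    hFun a b c d = 3 * arccos ((4 * a - 1) / 3) := by
  have hd : 2 * (a + d) - 1 = (4 * a - 1) / 3 := by linarith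
  unfold hFun
  rw [hbc, hcd, hd]
  ring

lemma critical_point_cases {a b c d : ℝ} (hsum : b + c + d = 1 - a)
    (h1 : (1 - 2*c - 2*d)^2 = (1 - 2*a - 2*c)^2)
    (h2 : (1 - 2*a - 2*c)^2 = (1 - 2*a - 2*d)^2) :
    (c = a ∧ d = a) ∨ (b = a ∧ d = a) ∨ (b = a ∧ c = a) ∨ (b = c ∧ c = d) := by
  rcases sq_eq_sq_iff_eq_or_eq_neg.mp h1 with e1 | e1 <;>
    rcases sq_eq_sq_iff_eq_or_eq_neg.mp h2 with e2 | e2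
  · exact .inl ⟨by linarith, by linarith⟩
  · exact .inr (.inl ⟨by linarith, by linarith⟩)
  · exact .inr (.inr (.inr ⟨by linarith, by linarith⟩))
  · exact .inr (.inr (.inl ⟨by linarith, by linarith⟩))

theorem stmt4_general (a b c d : ℝ)
    (hb : 0 ≤ b) (hc : 0 ≤ c) (hd : 0 ≤ d) (hsum : b + c + d = 1 - a)
    (h1 : (1 - 2*c - 2*d)^2 = (1 - 2*a - 2*c)^2)
    (h2 : (1 - 2*a - 2*c)^2 = (1 - 2*a - 2*d)^2) :
    (hFun a b c d = Real.pi + Real.arccos (4 * a - 1) ∧ a ≤ 1/3) ∨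
    hFun a b c d = 3 * Real.arccos ((4 * a - 1) / 3) := by
  rcases critical_point_cases hsum h1 h2 with ⟨hca, hda⟩ | ⟨hba, hda⟩ | ⟨hba, hca⟩ | ⟨hbc, hcd⟩
  · exact .inl ⟨hFun_of_c_eq_of_d_eq hsum hca hda, by linarith⟩
  · refine .inl ⟨?_, by linarith⟩
    rw [hFun_swap_bc]
    exact hFun_of_c_eq_of_d_eq (by linarith) hba hda
  · refine .inl ⟨?_, by linarith⟩
    rw [hFun_swap_cd, hFun_swap_bc]
    exact hFun_of_c_eq_of_d_eq (by linarith) hba hca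
  · exact .inr (hFun_of_b_eq_c_eq_d hsum hbc hcd)

/-- At critical points (characterized by the equalities of squares) of
`h_a` on the simplex `{b,c,d ≥ 0, b+c+d = 1-a}`, the value of `h_a` is either
`π + arccos(4a-1)` (a case which can occur only when `a ≤ 1/3`) or `3·arccos((4a-1)/3)`. -/
theorem stmt4 (a b c d : ℝ) (ha0 : 0 < a) (ha1 : a ≤ 1)
    (hb : 0 ≤ b) (hc : 0 ≤ c) (hd : 0 ≤ d) (hsum : b + c + d = 1 - a)
    (h1 : (1 - 2*c - 2*d)^2 = (1 - 2*a - 2*c)^2)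
    (h2 : (1 - 2*a - 2*c)^2 = (1 - 2*a - 2*d)^2) :
    (hFun a b c d = Real.pi + Real.arccos (4 * a - 1) ∧ a ≤ 1/3) ∨
    hFun a b c d = 3 * Real.arccos ((4 * a - 1) / 3) :=
  stmt4_general a b c d hb hc hd hsum h1 h2
end

section
/- For every real a with 0 < a ≤ 1/4, one has (1 - (π + arccos(4a-1))/(2π))/a ≥ 1, with equality when a = 1/4. -/
open Real

/-! Jordan's inequality `cos x ≥ 1 - 2x/π` on `[0, π/2]`, at `x = 2πa`, gives
`cos (π - 2πa) ≤ 4a - 1`; since `arccos` is antitone this is `arccos (4a - 1) ≤ π - 2πa`,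
which rearranges to the claim. -/

lemma arccos_four_mul_sub_one_le {a : ℝ} (ha₀ : 0 ≤ a) (ha : a ≤ 1 / 4) :
    arccos (4 * a - 1) ≤ π - 2 * π * a := by
  have hpi := pi_pos
  have hjordan : 1 - 4 * a ≤ cos (2 * π * a) := by
    have h := one_sub_mul_le_cos (x := 2 * π * a) (by positivity) (by nlinarith)
    rwa [show 2 / π * (2 * π * a) = 4 * a by field_simp; ring] at h
  calc arccos (4 * a - 1) ≤ arccos (cos (π - 2 * π * a)) :=
        arccos_le_arccos (by rw [cos_pi_sub]; linarith)
    _ = π - 2 * π * a := arccos_cos (by nlinarith) (by nlinarith)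

/-- For `0 < a ≤ 1/4`, `(1 - (π + arccos(4a-1))/(2π))/a ≥ 1`,
with equality at `a = 1/4`. -/
theorem stmt5 :
    (∀ a : ℝ, 0 < a → a ≤ 1/4 →
      (1 - (Real.pi + Real.arccos (4 * a - 1)) / (2 * Real.pi)) / a ≥ 1) ∧
    (1 - (Real.pi + Real.arccos (4 * (1/4 : ℝ) - 1)) / (2 * Real.pi)) / (1/4 : ℝ) = 1 := by
  have hpi := pi_pos
  refine ⟨fun a ha₀ ha => ?_, ?_⟩
  · have hfrac : (π + arccos (4 * a - 1)) / (2 * π) ≤ 1 - a := by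
      rw [div_le_iff₀ (by positivity)]
      linarith [arccos_four_mul_sub_one_le ha₀.le ha]
    rw [ge_iff_le, le_div_iff₀ ha₀]
    linarith
  · norm_num [arccos_zero]
    field_simp
    norm_num
end

section
/- For every real a with 0 < a ≤ 1/4, one has (1 - (3·arccos((4a-1)/3))/(2π))/a ≥ 1. -/
open Real

/-!
Jordan's inequality `sin θ ≥ 2θ/π` on `[0, π/2]` gives the chord bound `arccos x ≤ π/2 · (1 - x)`
for `x ≤ 0`. At `x = (4a - 1)/3` the right-hand side is `2π/3 · (1 - a)`, so the numerator is at
least `a`.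
-/

theorem Real.arcsin_le_pi_div_two_mul {t : ℝ} (ht : 0 ≤ t) : arcsin t ≤ π / 2 * t := by
  rcases le_or_gt t 1 with ht1 | ht1
  · have hjordan := mul_le_sin (arcsin_nonneg.2 ht) (arcsin_le_pi_div_two t)
    rw [sin_arcsin (by linarith) ht1, div_mul_eq_mul_div, div_le_iff₀ pi_pos] at hjordan
    nlinarith [pi_pos]
  · rw [arcsin_of_one_le ht1.le]
    nlinarith [pi_pos]

theorem Real.arccos_le_pi_div_two_mul_one_sub {x : ℝ} (hx : x ≤ 0) :
    arccos x ≤ π / 2 * (1 - x) := by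
  have h := arcsin_le_pi_div_two_mul (neg_nonneg.2 hx)
  rw [arcsin_neg] at h
  rw [arccos]
  linarith

/-- For `0 < a ≤ 1/4`, `(1 - 3·arccos((4a-1)/3)/(2π))/a ≥ 1`. -/
theorem stmt6 (a : ℝ) (ha0 : 0 < a) (ha1 : a ≤ 1/4) :
    (1 - (3 * Real.arccos ((4 * a - 1) / 3)) / (2 * Real.pi)) / a ≥ 1 := by
  have hbound := arccos_le_pi_div_two_mul_one_sub (x := (4 * a - 1) / 3) (by linarith)
  have hnum : (3 * arccos ((4 * a - 1) / 3)) / (2 * π) ≤ 1 - a := by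
    rw [div_le_iff₀ (by positivity)]
    nlinarith [pi_pos]
  rw [ge_iff_le, le_div_iff₀ ha0]
  linarith
end

section
/- Let x be a real number with -1 ≤ x ≤ 1. If x ≥ 0, then π + arccos(x) ≤ 3·arccos(x/3). If x ≤ 0, then π + arccos(x) ≥ 3·arccos(x/3). -/
/-!
Put `θ = arccos (x / 3)`. Since `|x / 3| ≤ 1/2`, the angle `3θ - π` lies in `[0, π]`, and the
triple-angle formula gives `cos (3θ - π) = x - 4x³/27`; hence `3θ = π + arccos (x - 4x³/27)`.
Both inequalities then follow from the antitonicity of `arccos`, as `x - 4x³/27` lies below `x`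
exactly when `x ≥ 0`.
-/

open Real

namespace Real

lemma arccos_one_half : arccos (1 / 2) = π / 3 :=
  arccos_eq_of_eq_cos (by positivity) (by linarith [pi_pos]) cos_pi_div_three.symm

lemma three_mul_arccos {y : ℝ} (hy₀ : -(1 / 2) ≤ y) (hy₁ : y ≤ 1 / 2) :
    3 * arccos y = π + arccos (3 * y - 4 * y ^ 3) := by
  have hlo : π / 3 ≤ arccos y := arccos_one_half ▸ arccos_le_arccos hy₁
  have hhi : arccos y ≤ 2 * π / 3 := by
    have := arccos_le_arccos hy₀
    rw [arccos_neg, arccos_one_half] at this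
    linarith
  have hcos : 3 * y - 4 * y ^ 3 = cos (3 * arccos y - π) := by
    rw [cos_sub_pi, cos_three_mul, cos_arccos (by linarith) (by linarith)]
    ring
  rw [arccos_eq_of_eq_cos (by linarith) (by linarith) hcos]
  ring

end Real

/-- For `-1 ≤ x ≤ 1`: if `x ≥ 0` then `π + arccos x ≤ 3·arccos(x/3)`;
if `x ≤ 0` then `π + arccos x ≥ 3·arccos(x/3)`. -/
theorem stmt11 (x : ℝ) (h0 : -1 ≤ x) (h1 : x ≤ 1) :
    (x ≥ 0 → Real.pi + Real.arccos x ≤ 3 * Real.arccos (x / 3)) ∧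
    (x ≤ 0 → Real.pi + Real.arccos x ≥ 3 * Real.arccos (x / 3)) := by
  have key : 3 * arccos (x / 3) = π + arccos (x - 4 * x ^ 3 / 27) := by
    rw [three_mul_arccos (by linarith) (by linarith)]
    ring_nf
  rw [key]
  constructor
  · intro hx
    gcongr
    linarith [pow_nonneg hx 3]
  · intro hx
    gcongr
    linarith [Odd.pow_nonpos (by decide : Odd 3) hx]
end

section
/- The function f : (0, 1/4] → ℝ defined by f(x) = (1 - (π + arccos(4x-1))/(2π))/x is decreasing on the interval (0, 1/4]; that is, for all x, y ∈ (0, 1/4] with x ≤ y, one has f(y) ≤ f(x). -/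
/-!
Substituting `θ = arccos (1 - 4x)`, so that `x = (1 - cos θ) / 4` and `θ ∈ (0, π/2]`, the function
becomes `2θ / (π (1 - cos θ))`. Its reciprocal is, up to a constant, the slope of the chord of the
convex function `1 - cos` from the origin, which is nondecreasing in `θ`.
-/

open Real Set

lemma one_sub_cos_div_le_one_sub_cos_div {a b : ℝ} (ha : 0 < a) (hab : a ≤ b) (hb : b ≤ π / 2) :
    (1 - cos a) / a ≤ (1 - cos b) / b := by
  have hconvex : ConvexOn ℝ (Icc (-(π / 2)) (π / 2)) (fun t => 1 - cos t) :=
    (convexOn_const 1 (convex_Icc _ _)).sub strictConcaveOn_cos_Icc.concaveOn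
  have hmem : ∀ t, 0 ≤ t → t ≤ π / 2 → t ∈ Icc (-(π / 2)) (π / 2) := fun t h0 h1 =>
    ⟨by linarith [pi_pos], h1⟩
  simpa using hconvex.secant_mono (hmem 0 le_rfl (by positivity)) (hmem a ha.le (hab.trans hb))
    (hmem b (ha.le.trans hab) hb) ha.ne' (ha.trans_le hab).ne' hab

lemma one_sub_pi_add_arccos_neg_div (t : ℝ) :
    1 - (π + arccos (-t)) / (2 * π) = arccos t / (2 * π) := by
  rw [arccos_neg]
  field_simp
  ring

lemma antitoneOn_arccos_one_sub_four_mul_div :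
    AntitoneOn (fun x => arccos (1 - 4 * x) / x) (Ioc 0 (1 / 4)) := by
  rintro x ⟨hx0, hx⟩ y ⟨hy0, hy⟩ hxy
  have hA : 0 < arccos (1 - 4 * x) := arccos_pos.2 (by linarith)
  have hAB : arccos (1 - 4 * x) ≤ arccos (1 - 4 * y) := arccos_le_arccos (by linarith)
  have hB : arccos (1 - 4 * y) ≤ π / 2 := arccos_le_pi_div_two.2 (by linarith)
  have hslope := one_sub_cos_div_le_one_sub_cos_div hA hAB hB
  rw [cos_arccos (by linarith) (by linarith), cos_arccos (by linarith) (by linarith),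
    div_le_div_iff₀ hA (hA.trans_le hAB)] at hslope
  rw [div_le_div_iff₀ hy0 hx0]
  linarith

/-- `f(x) = (1 - (π + arccos(4x-1))/(2π))/x` is decreasing on `(0, 1/4]`. -/
theorem stmt12 (x y : ℝ) (hx0 : 0 < x) (hx : x ≤ 1/4) (hy0 : 0 < y) (hy : y ≤ 1/4)
    (hxy : x ≤ y) :
    (1 - (Real.pi + Real.arccos (4 * y - 1)) / (2 * Real.pi)) / y ≤
      (1 - (Real.pi + Real.arccos (4 * x - 1)) / (2 * Real.pi)) / x := by
  have h := antitoneOn_arccos_one_sub_four_mul_div ⟨hx0, hx⟩ ⟨hy0, hy⟩ hxy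
  rw [show 4 * y - 1 = -(1 - 4 * y) by ring, show 4 * x - 1 = -(1 - 4 * x) by ring,
    one_sub_pi_add_arccos_neg_div, one_sub_pi_add_arccos_neg_div,
    div_right_comm (arccos (1 - 4 * y)), div_right_comm (arccos (1 - 4 * x))]
  exact div_le_div_of_nonneg_right h (by positivity)
end
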